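/- arXiv:2403.12896 — 2 statements merged into one kernel-verified Lean document; each statement's English description precedes it below -/
import Mathlib

section
/- Let σ be positive-definite Hermitian, E_σ a linear map on matrices that is self-adjoint with respect to the Hilbert–Schmidt inner product and satisfies E_σ(I) = σ and E_σ⁻¹(σ) = I. Let Θ(A) = θAθ⁻¹ for an antiunitary θ, and for a linear map A on matrices define A^# = Θ ∘ E_σ ∘ A* ∘ E_σ⁻¹ ∘ Θ*, where A* is the Hilbert–Schmidt adjoint. Then for any two linear maps A, B on matrices, tr(B(A(σ))) = tr(A^#(B^#(Θσ))). -/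
open Matrix
open scoped ComplexOrder

/-- Crooks-type duality: with `A^# = Θ ∘ E_σ ∘ A* ∘ E_σ⁻¹ ∘ Θ*`, one has
`tr(B(A(σ))) = tr(A^#(B^#(Θσ)))`. -/
theorem crooks_duality {n : Type*} [Fintype n] [DecidableEq n]
    (σ : Matrix n n ℂ) (hσ : σ.PosDef) (hσH : σ.IsHermitian)
    -- the density map `E_σ` and its inverse
    (E Einv : Matrix n n ℂ →ₗ[ℂ] Matrix n n ℂ)
    (hEinv₁ : ∀ X, E (Einv X) = X) (hEinv₂ : ∀ X, Einv (E X) = X)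
    (hEsa : ∀ X Y, (Xᴴ * E Y).trace = ((E X)ᴴ * Y).trace)
    (hEI : E 1 = σ) (hEinvσ : Einv σ = 1)
    -- the antiunitary conjugation map `Θ` and its Hilbert–Schmidt adjoint `Θs`
    (Θ Θs : Matrix n n ℂ → Matrix n n ℂ)
    (hΘadj : ∀ X Y, (Xᴴ * Θ Y).trace = (Yᴴ * Θs X).trace)
    (hΘinv₁ : ∀ X, Θ (Θs X) = X) (hΘinv₂ : ∀ X, Θs (Θ X) = X)
    (hΘI : Θ 1 = 1) (hΘsI : Θs 1 = 1)
    -- linear maps `A`, `B` with Hilbert–Schmidt adjoints `Astar`, `Bstar`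
    (A B Astar Bstar : Matrix n n ℂ →ₗ[ℂ] Matrix n n ℂ)
    (hA : ∀ X Y, (Xᴴ * A Y).trace = ((Astar X)ᴴ * Y).trace)
    (hB : ∀ X Y, (Xᴴ * B Y).trace = ((Bstar X)ᴴ * Y).trace) :
    (B (A σ)).trace =
      (Θ (E (Astar (Einv (Θs (Θ (E (Bstar (Einv (Θs (Θ σ))))))))))).trace := by
  rw [hΘinv₂ σ, hEinvσ, hΘinv₂ (E (Bstar 1)), hEinv₂ (Bstar 1)]
  calc (B (A σ)).trace
      = ((1 : Matrix n n ℂ)ᴴ * B (A σ)).trace := by simp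
    _ = ((Bstar 1)ᴴ * A σ).trace := hB 1 (A σ)
    _ = ((Astar (Bstar 1))ᴴ * σ).trace := hA (Bstar 1) σ
    _ = ((Astar (Bstar 1))ᴴ * E 1).trace := by rw [hEI]
    _ = ((E (Astar (Bstar 1)))ᴴ * 1).trace := hEsa _ 1
    _ = ((E (Astar (Bstar 1)))ᴴ * Θs 1).trace := by rw [hΘsI]
    _ = ((1 : Matrix n n ℂ)ᴴ * Θ (E (Astar (Bstar 1)))).trace := (hΘadj 1 _).symm
    _ = (Θ (E (Astar (Bstar 1)))).trace := by simp
end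

section
/- Classical detailed balance from the quantum condition: let S be a strictly positive probability distribution on a finite set, r(z|z') a rate matrix, and define the classical generator L acting on diagonal matrices with (Lρ)(z) = Σ_{z'} r(z|z') P(z') for ρ = Σ_z P(z)|z⟩⟨z|. With density map E_σ(A) = Σ_z a(z)S(z)|z⟩⟨z| for diagonal A, the weighted-adjoint condition L* = Θ L_* Θ* for Θ induced by a permutation T of the finite set (Θ|z⟩⟨z| = |T⁻¹z⟩⟨T⁻¹z|) together with Θσ = σ is equivalent to: r(z'|z)S(z) = r(Tz|Tz')S(Tz') and S(z) = S(Tz) for all z, z'. -/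
open Finset

/-!
Substituting `z' ↦ T z'` on the right turns the weighted-adjoint condition into the equality of
two linear functionals of `a` for each `z`; testing on indicator functions shows it holds exactly
when `r(z'|z) = r(Tz|Tz') S(Tz') / S(Tz)` for all `z, z'`. Given `S ∘ T = S` and `S > 0`, clearing
the denominator gives the detailed-balance relation.
-/

theorem Equiv.Perm.forall_sum_mul_eq_sum_mul_symm_iff {Z R : Type*} [Fintype Z] [CommSemiring R]
    (f g : Z → Z → R) (T : Equiv.Perm Z) :
    (∀ (a : Z → R) (z : Z), ∑ z', a z' * f z' z = ∑ z', g z z' * a (T.symm z')) ↔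
      ∀ z z', f z' z = g z (T z') := by
  classical
  have hsubst (a : Z → R) (z : Z) :
      ∑ z', g z z' * a (T.symm z') = ∑ z', a z' * g z (T z') := by
    rw [← Equiv.sum_comp T]
    simp only [Equiv.symm_apply_apply, mul_comm]
  simp only [hsubst]
  constructor
  · intro h z z'
    simpa [Pi.single_apply] using h (Pi.single z' 1) z
  · intro h a z
    simp only [h]

theorem classical_detailed_balance_general {Z : Type*} [Fintype Z]
    (S : Z → ℝ) (hS : ∀ z, 0 < S z)
    (r : Z → Z → ℝ) (T : Equiv.Perm Z) :
    ((∀ (a : Z → ℝ) (z : Z),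
        (∑ z', a z' * r z' z) =
          ∑ z', (r (T z) z' * S z' / S (T z)) * a (T.symm z')) ∧
      (∀ z, S (T z) = S z)) ↔
    ((∀ z z', r z' z * S z = r (T z) (T z') * S (T z')) ∧
      (∀ z, S z = S (T z))) := by
  have hfix : (∀ z, S (T z) = S z) ↔ ∀ z, S z = S (T z) := forall_congr' fun _ => eq_comm
  rw [T.forall_sum_mul_eq_sum_mul_symm_iff r (fun z z' => r (T z) z' * S z' / S (T z)), hfix]
  refine and_congr_left fun hT => forall₂_congr fun z z' => ?_
  rw [← hT z, eq_div_iff (hS z).ne']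

/-- Classical detailed balance from the quantum condition: on diagonal
observables, the condition `L* = Θ L_* Θ*` (with `Θ` induced by a permutation
`T`) together with `Θσ = σ` is equivalent to
`r(z'|z)S(z) = r(Tz|Tz')S(Tz')` and `S(z) = S(Tz)`. -/
theorem classical_detailed_balance {Z : Type*} [Fintype Z]
    (S : Z → ℝ) (hS : ∀ z, 0 < S z) (hS1 : ∑ z, S z = 1)
    (r : Z → Z → ℝ) (T : Equiv.Perm Z) :
    ((∀ (a : Z → ℝ) (z : Z),
        (∑ z', a z' * r z' z) =
          ∑ z', (r (T z) z' * S z' / S (T z)) * a (T.symm z')) ∧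
      (∀ z, S (T z) = S z)) ↔
    ((∀ z z', r z' z * S z = r (T z) (T z') * S (T z')) ∧
      (∀ z, S z = S (T z))) :=
  classical_detailed_balance_general S hS r T
end
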